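/- For the reflected van der Corput sequence (1−φ(n))_{n≥0}, for all 0 ≤ j < ⌈log₂ N⌉ and all m ∈ {0,...,2^j−1}, the Haar coefficient of the local discrepancy satisfies |μ^{N,1−φ}_{j,m}| ≤ 2^{−j}/N, and for j ≥ ⌈log₂ N⌉ one has |μ^{N,1−φ}_{j,m}| = 2^{−2j−2}. -/

import Mathlib

open MeasureTheory Finset

/-- Base-2 radical inverse: for `n = ∑ nᵢ 2ⁱ`, `radInv n = ∑ nᵢ 2^{-i-1}`. -/
noncomputable def radInv (n : ℕ) : ℝ :=
  ∑ i ∈ Finset.range n, if n.testBit i then (1:ℝ)/2^(i+1) else 0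

/-- L∞-normalized Haar function supported on `I_{j,m} = [m/2^j, (m+1)/2^j)`. -/
noncomputable def haarFn (j m : ℕ) (t : ℝ) : ℝ :=
  if (m:ℝ)/2^j ≤ t ∧ t < (m:ℝ)/2^j + 1/2^(j+1) then 1
  else if (m:ℝ)/2^j + 1/2^(j+1) ≤ t ∧ t < ((m:ℝ)+1)/2^j then -1
  else 0

/-- Local discrepancy of the first `N` terms of the sequence `x`. -/
noncomputable def disc (x : ℕ → ℝ) (N : ℕ) (t : ℝ) : ℝ :=
  (∑ n ∈ Finset.range N, Set.indicator (Set.Ico (0:ℝ) t) (fun _ => (1:ℝ)) (x n)) / N - t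

/-- Symmetrized van der Corput sequence: `z_{2m} = φ(m)`, `z_{2m+1} = 1 - φ(m)`. -/
noncomputable def vdcSym (n : ℕ) : ℝ :=
  if n % 2 = 0 then radInv (n / 2) else 1 - radInv (n / 2)

/-- Haar coefficient `μ_{j,m}` of the local discrepancy of the first `N` terms of `x`. -/
noncomputable def haarCoeff (x : ℕ → ℝ) (N j m : ℕ) : ℝ :=
  ∫ t in (0:ℝ)..1, disc x N t * haarFn j m t

/-!
Write `h_{j,m} = 1_{[a,b)} - 1_{[b,c)}`. Then `-∫ t h_{j,m}(t) dt = 2^{-2j-2}`, and a point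
`x` contributes `∫_x^1 h_{j,m} = -2^{-j} τ(2^j x - m)`, where `τ` is the unit tent function.
Since `φ(n) = φ(n mod 2^j) + 2^{-j} φ(⌊n/2^j⌋)` and `2^j φ(s)` is the bit reversal of `s < 2^j`,
the point `1 - φ(n)` contributes only for `n` in a single residue class `r` mod `2^j`, and then
`2^{-j} τ(φ(⌊n/2^j⌋))`. Because `τ(φ(2k)) + τ(φ(2k+1)) = 1/2`, the `K = N/2^j + O(1)`
contributing terms sum to `K/4 + O(1)`, which cancels the main term up to `2^{-j}/N`. When
`N ≤ 2^j` all contributing `n` have `⌊n/2^j⌋ = 0`, and the sum vanishes.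
-/

lemma radInv_eq_sum_range {n B : ℕ} (h : n ≤ B) :
    radInv n = ∑ i ∈ range B, if n.testBit i then (1:ℝ) / 2 ^ (i + 1) else 0 := by
  refine Finset.sum_subset (range_subset_range.2 h) fun i _ hi => ?_
  rw [Nat.testBit_lt_two_pow ((not_lt.1 (mem_range.not.1 hi)).trans_lt Nat.lt_two_pow_self)]
  simp

@[simp]
lemma radInv_zero : radInv 0 = 0 := by simp [radInv]

lemma radInv_nonneg (n : ℕ) : 0 ≤ radInv n :=
  Finset.sum_nonneg fun i _ => by split <;> positivity

lemma radInv_eq_mod_two_add_radInv_div_two (n : ℕ) :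
    radInv n = ((n % 2 : ℕ) + radInv (n / 2)) / 2 := by
  have hlow : radInv n = (if n.testBit 0 then (1:ℝ) / 2 else 0)
      + ∑ i ∈ range n, if (n / 2).testBit i then (1:ℝ) / 2 ^ (i + 2) else 0 := by
    rw [radInv_eq_sum_range n.le_succ, sum_range_succ', add_comm]
    simp only [Nat.testBit_succ, zero_add, pow_one]
  have hhigh : radInv (n / 2) / 2
      = ∑ i ∈ range n, if (n / 2).testBit i then (1:ℝ) / 2 ^ (i + 2) else 0 := by
    rw [radInv_eq_sum_range (Nat.div_le_self n 2), sum_div]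
    refine sum_congr rfl fun i _ => ?_
    split <;> ring
  rw [hlow, ← hhigh, Nat.testBit_zero]
  rcases Nat.mod_two_eq_zero_or_one n with h | h <;> simp [h, add_div]

lemma radInv_two_mul (n : ℕ) : radInv (2 * n) = radInv n / 2 := by
  simp [radInv_eq_mod_two_add_radInv_div_two (2 * n)]

lemma radInv_two_mul_add_one (n : ℕ) : radInv (2 * n + 1) = (1 + radInv n) / 2 := by
  rw [radInv_eq_mod_two_add_radInv_div_two, show (2 * n + 1) % 2 = 1 by omega,
    show (2 * n + 1) / 2 = n by omega]
  norm_num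

lemma radInv_eq_radInv_mod_add_radInv_div (j n : ℕ) :
    radInv n = radInv (n % 2 ^ j) + radInv (n / 2 ^ j) / 2 ^ j := by
  induction j generalizing n with
  | zero => simp [Nat.mod_one]
  | succ j ih =>
    rw [radInv_eq_mod_two_add_radInv_div_two n, ih,
      radInv_eq_mod_two_add_radInv_div_two (n % 2 ^ (j + 1)), pow_succ', Nat.mod_mul_right_mod,
      Nat.mod_mul_right_div_self, Nat.div_div_eq_div_mul]
    ring

def bitRev : ℕ → ℕ → ℕ
  | 0, _ => 0
  | j + 1, s => s % 2 * 2 ^ j + bitRev j (s / 2)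

lemma bitRev_lt (j s : ℕ) : bitRev j s < 2 ^ j := by
  induction j generalizing s with
  | zero => simp [bitRev]
  | succ j ih =>
    have := ih (s / 2)
    have : s % 2 * 2 ^ j ≤ 1 * 2 ^ j := Nat.mul_le_mul_right _ (by omega)
    rw [bitRev, pow_succ]; omega

lemma radInv_eq_bitRev_div {j s : ℕ} (hs : s < 2 ^ j) : radInv s = bitRev j s / 2 ^ j := by
  induction j generalizing s with
  | zero => simp [show s = 0 by simpa using hs, bitRev]
  | succ j ih =>
    rw [radInv_eq_mod_two_add_radInv_div_two, ih (by omega), bitRev]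
    push_cast
    field_simp
    ring

lemma radInv_lt_one (n : ℕ) : radInv n < 1 := by
  rw [radInv_eq_bitRev_div Nat.lt_two_pow_self, div_lt_one (by positivity)]
  exact_mod_cast bitRev_lt n n

lemma exists_bitRev_eq {j q : ℕ} (hq : q < 2 ^ j) : ∃ s < 2 ^ j, bitRev j s = q := by
  induction j generalizing q with
  | zero => exact ⟨0, by simp, by simp [bitRev]; omega⟩
  | succ j ih =>
    obtain ⟨s, hs, hsq⟩ := ih (Nat.mod_lt q (by positivity))
    have hdiv : q / 2 ^ j < 2 := Nat.div_lt_of_lt_mul (by rwa [← pow_succ])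
    have hq := Nat.div_add_mod q (2 ^ j)
    generalize q / 2 ^ j = b at hdiv hq
    refine ⟨2 * s + b, by rw [pow_succ]; omega, ?_⟩
    rw [bitRev, show (2 * s + b) / 2 = s by omega, show (2 * s + b) % 2 = b by omega, hsq]
    linarith

lemma bitRev_injOn (j : ℕ) : Set.InjOn (bitRev j) (Set.Iio (2 ^ j)) := by
  have h := Finset.injOn_of_surjOn_of_card_le (s := range (2 ^ j)) (t := range (2 ^ j))
    (bitRev j) (fun s _ => by simpa using bitRev_lt j s)
    (fun q hq => by simpa using exists_bitRev_eq (by simpa using hq)) le_rfl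
  simpa using h

noncomputable def tent (u : ℝ) : ℝ := max (min u (1 - u)) 0

lemma tent_nonneg (u : ℝ) : 0 ≤ tent u := le_max_right _ _

lemma tent_le_half (u : ℝ) : tent u ≤ 1 / 2 :=
  max_le (by linarith [min_le_left u (1 - u), min_le_right u (1 - u)]) (by norm_num)

lemma tent_one_sub (u : ℝ) : tent (1 - u) = tent u := by
  rw [tent, tent, sub_sub_cancel, min_comm]

lemma tent_eq_zero {u : ℝ} (hu : u ≤ 0 ∨ 1 ≤ u) : tent u = 0 := by
  refine max_eq_right ?_
  rcases hu with hu | hu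
  · exact (min_le_left _ _).trans hu
  · exact (min_le_right _ _).trans (by linarith)

lemma tent_of_le_half {u : ℝ} (h0 : 0 ≤ u) (h1 : u ≤ 1 / 2) : tent u = u := by
  rw [tent, min_eq_left (by linarith), max_eq_left h0]

lemma tent_int_add {k : ℤ} {w : ℝ} (hw0 : 0 ≤ w) (hw1 : w ≤ 1) :
    tent (k + w) = if k = 0 then tent w else 0 := by
  split_ifs with hk
  · simp [hk]
  · refine tent_eq_zero ?_
    rcases lt_or_gt_of_ne hk with hk | hk
    · have : (k : ℝ) ≤ -1 := by exact_mod_cast (show k ≤ -1 by omega)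
      exact Or.inl (by linarith)
    · have : (1 : ℝ) ≤ k := by exact_mod_cast (show 1 ≤ k by omega)
      exact Or.inr (by linarith)

lemma tent_radInv_two_mul_add_tent_radInv_two_mul_add_one (n : ℕ) :
    tent (radInv (2 * n)) + tent (radInv (2 * n + 1)) = 1 / 2 := by
  have h0 := radInv_nonneg n
  have h1 := radInv_lt_one n
  rw [radInv_two_mul, radInv_two_mul_add_one, ← tent_one_sub ((1 + radInv n) / 2),
    tent_of_le_half (by positivity) (by linarith), tent_of_le_half (by linarith) (by linarith)]
  ring

lemma abs_sum_range_sub_le_of_pairs (f : ℕ → ℝ) {a b : ℝ}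
    (hpair : ∀ n, f (2 * n) + f (2 * n + 1) = 2 * a) (hf : ∀ n, |f n - a| ≤ b) (K : ℕ) :
    |∑ k ∈ range K, f k - K * a| ≤ b := by
  have heven : ∀ n, ∑ k ∈ range (2 * n), f k = 2 * n * a := by
    intro n
    induction n with
    | zero => simp
    | succ n ih =>
      rw [show 2 * (n + 1) = 2 * n + 1 + 1 by ring, sum_range_succ, sum_range_succ, add_assoc,
        ih, hpair]
      push_cast; ring
  obtain ⟨n, rfl | rfl⟩ := Nat.even_or_odd' K
  · rw [heven]; push_cast
    simpa using (abs_nonneg _).trans (hf 0)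
  · rw [sum_range_succ, heven]; push_cast
    convert hf (2 * n) using 2; ring

lemma abs_sum_tent_radInv_sub_le (K : ℕ) :
    |∑ k ∈ range K, tent (radInv k) - K / 4| ≤ 1 / 4 := by
  have h := abs_sum_range_sub_le_of_pairs (fun k => tent (radInv k)) (a := 1 / 4) (b := 1 / 4)
    (fun n => by rw [tent_radInv_two_mul_add_tent_radInv_two_mul_add_one]; norm_num)
    (fun n => abs_le.2 ⟨by linarith [tent_nonneg (radInv n)],
      by linarith [tent_le_half (radInv n)]⟩) K
  simpa [div_eq_mul_inv] using h

lemma lt_add_sub_one_sub_div_iff {d r : ℕ} (hr : r < d) (N k : ℕ) :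
    k < (N + d - 1 - r) / d ↔ d * k + r < N := by
  rw [← Nat.add_one_le_iff, Nat.le_div_iff_mul_le (by omega), add_mul, one_mul, mul_comm]
  omega

lemma sum_filter_mod_eq_sum_range {M : Type*} [AddCommMonoid M] {d r N K : ℕ} (hr : r < d)
    (hK : ∀ k, k < K ↔ d * k + r < N) (f : ℕ → M) :
    ∑ n ∈ (range N).filter (· % d = r), f (n / d) = ∑ k ∈ range K, f k := by
  have hd : 0 < d := by omega
  refine Finset.sum_nbij' (· / d) (d * · + r) (fun n hn => ?_) (fun k hk => ?_)
    (fun n hn => ?_) (fun k _ => ?_) (fun _ _ => rfl)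
  · simp only [mem_filter, mem_range] at hn ⊢
    rw [hK, ← hn.2, Nat.div_add_mod]; exact hn.1
  · simp only [mem_filter, mem_range] at hk ⊢
    exact ⟨(hK k).1 hk, by rw [Nat.mul_add_mod, Nat.mod_eq_of_lt hr]⟩
  · simp only [mem_filter, mem_range] at hn
    rw [← hn.2, Nat.div_add_mod]
  · rw [Nat.mul_add_div hd, Nat.div_eq_of_lt hr, add_zero]

lemma abs_sub_mul_le_of_forall_lt_iff {d r N K : ℕ} (hr : r < d)
    (hK : ∀ k, k < K ↔ d * k + r < N) : |(N : ℝ) - d * K| ≤ d := by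
  have hup : N ≤ d * K + r := not_lt.1 ((hK K).not.1 (lt_irrefl K))
  have hlow : d * K + r < N + d := by
    rcases K with _ | K
    · omega
    · have := (hK K).1 (Nat.lt_succ_self K); rw [mul_add]; omega
  have h1 : (N : ℝ) ≤ d * K + r := by exact_mod_cast hup
  have h2 : (d * K + r : ℝ) < N + d := by exact_mod_cast hlow
  have h3 : (r : ℝ) < d := by exact_mod_cast hr
  rw [abs_le]
  constructor <;> linarith [(r.cast_nonneg : (0 : ℝ) ≤ r)]

lemma volume_real_Ioi_inter_Ico (x a b : ℝ) :
    volume.real (Set.Ioi x ∩ Set.Ico a b) = max (b - max a x) 0 := by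
  have hsub : Set.Ioi x ∩ Set.Ico a b ⊆ Set.Ico (max a x) b :=
    fun t ⟨hx, ha, hb⟩ => ⟨max_le ha (le_of_lt hx), hb⟩
  have hsup : Set.Ioo (max a x) b ⊆ Set.Ioi x ∩ Set.Ico a b :=
    fun t ⟨h, hb⟩ => ⟨(le_max_right a x).trans_lt h, (le_max_left a x).trans h.le, hb⟩
  have hvol : volume (Set.Ioi x ∩ Set.Ico a b) = ENNReal.ofReal (b - max a x) :=
    le_antisymm ((measure_mono hsub).trans_eq Real.volume_Ico)
      (Real.volume_Ioo.symm.trans_le (measure_mono hsup))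
  rw [measureReal_def, hvol, ENNReal.toReal_ofReal']

lemma integrable_indicator_Ico_one (a b : ℝ) :
    Integrable ((Set.Ico a b).indicator (1 : ℝ → ℝ)) :=
  (integrableOn_const (by simp)).integrable_indicator measurableSet_Ico

lemma integral_indicator_Ioi_mul_sub_indicator (x a b c : ℝ) :
    ∫ t, (Set.Ioi x).indicator 1 t * ((Set.Ico a b).indicator 1 t - (Set.Ico b c).indicator 1 t)
      = max (b - max a x) 0 - max (c - max b x) 0 := by
  have hmeas : ∀ u v : ℝ, MeasurableSet (Set.Ioi x ∩ Set.Ico u v) :=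
    fun u v => measurableSet_Ioi.inter measurableSet_Ico
  have hint : ∀ u v : ℝ, Integrable ((Set.Ioi x ∩ Set.Ico u v).indicator (1 : ℝ → ℝ)) :=
    fun u v => (integrableOn_const ((measure_mono Set.inter_subset_right).trans_lt
      (by simp)).ne).integrable_indicator (hmeas u v)
  have hprod : ∀ u v t : ℝ, (Set.Ioi x).indicator 1 t * (Set.Ico u v).indicator 1 t
      = (Set.Ioi x ∩ Set.Ico u v).indicator (1 : ℝ → ℝ) t := fun u v t => by
    rw [Set.inter_indicator_one, Pi.mul_apply]
  simp_rw [mul_sub, hprod]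
  rw [integral_sub (hint a b) (hint b c), integral_indicator_one (hmeas a b),
    integral_indicator_one (hmeas b c), volume_real_Ioi_inter_Ico, volume_real_Ioi_inter_Ico]

lemma integrable_indicator_Ico_id (u v : ℝ) :
    Integrable ((Set.Ico u v).indicator fun t : ℝ => t) :=
  (continuous_id.integrableOn_Icc.mono_set Set.Ico_subset_Icc_self).integrable_indicator
    measurableSet_Ico

lemma mul_indicator_Ico_one (u v t : ℝ) :
    t * (Set.Ico u v).indicator 1 t = (Set.Ico u v).indicator (fun t => t) t := by
  simp [Set.indicator_apply]

lemma integral_mul_sub_indicator {a b c : ℝ} (hab : a ≤ b) (hbc : b ≤ c) :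
    ∫ t, t * ((Set.Ico a b).indicator 1 t - (Set.Ico b c).indicator 1 t)
      = (b ^ 2 - a ^ 2) / 2 - (c ^ 2 - b ^ 2) / 2 := by
  have hint_id : ∀ u v : ℝ, u ≤ v →
      ∫ t, (Set.Ico u v).indicator (fun t : ℝ => t) t = (v ^ 2 - u ^ 2) / 2 := fun u v huv => by
    rw [integral_indicator measurableSet_Ico, integral_Ico_eq_integral_Ioc,
      ← intervalIntegral.integral_of_le huv, integral_id]
  simp only [mul_sub, mul_indicator_Ico_one]
  rw [integral_sub (integrable_indicator_Ico_id a b) (integrable_indicator_Ico_id b c),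
    hint_id a b hab, hint_id b c hbc]

lemma haarFn_eq_indicator (j m : ℕ) :
    haarFn j m = (Set.Ico ((m : ℝ) / 2 ^ j) (m / 2 ^ j + 1 / 2 ^ (j + 1))).indicator 1
      - (Set.Ico ((m : ℝ) / 2 ^ j + 1 / 2 ^ (j + 1)) ((m + 1) / 2 ^ j)).indicator 1 := by
  ext t
  simp only [haarFn, Pi.sub_apply, Set.indicator_apply, Set.mem_Ico, Pi.one_apply]
  split_ifs with h1 h2 h3 <;> first | exact absurd h2.1 (not_le.2 h1.2) | norm_num

lemma haarFn_breakpoints (j m : ℕ) :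
    (m : ℝ) / 2 ^ j ≤ m / 2 ^ j + 1 / 2 ^ (j + 1) ∧
      (m : ℝ) / 2 ^ j + 1 / 2 ^ (j + 1) = ((m + 1) / 2 ^ j + m / 2 ^ j) / 2 := by
  constructor
  · exact le_add_of_nonneg_right (by positivity)
  · rw [pow_succ]; field_simp; ring

lemma tent_div_two_pow (j m : ℕ) (x : ℝ) :
    tent (2 ^ j * x - m) / 2 ^ j = max (min (x - m / 2 ^ j) ((m + 1) / 2 ^ j - x)) 0 := by
  rw [tent, ← max_div_div_right (by positivity), zero_div, ← min_div_div_right (by positivity)]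
  congr 2
  · field_simp
  · field_simp; ring

lemma integral_indicator_Ioi_mul_haarFn (j m : ℕ) (x : ℝ) :
    ∫ t, (Set.Ioi x).indicator 1 t * haarFn j m t = -(tent (2 ^ j * x - m) / 2 ^ j) := by
  obtain ⟨hab, hmid⟩ := haarFn_breakpoints j m
  simp only [haarFn_eq_indicator, Pi.sub_apply]
  rw [integral_indicator_Ioi_mul_sub_indicator, tent_div_two_pow]
  generalize (m : ℝ) / 2 ^ j = a, (m : ℝ) / 2 ^ j + 1 / 2 ^ (j + 1) = b,
    ((m : ℝ) + 1) / 2 ^ j = c at hab hmid ⊢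
  simp only [max_def, min_def]
  split_ifs <;> linarith

lemma integral_mul_haarFn (j m : ℕ) : ∫ t, t * haarFn j m t = -(1 / 2 ^ (2 * j + 2)) := by
  obtain ⟨hab, hmid⟩ := haarFn_breakpoints j m
  simp only [haarFn_eq_indicator, Pi.sub_apply]
  rw [integral_mul_sub_indicator hab (by linarith), show (2 : ℝ) ^ (j + 1) = 2 * 2 ^ j by ring,
    show (2 : ℝ) ^ (2 * j + 2) = 4 * (2 ^ j) ^ 2 by ring]
  field_simp
  ring

lemma integrable_haarFn (j m : ℕ) : Integrable (haarFn j m) := by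
  rw [haarFn_eq_indicator]
  exact (integrable_indicator_Ico_one _ _).sub (integrable_indicator_Ico_one _ _)

lemma integrable_mul_haarFn (j m : ℕ) : Integrable fun t => t * haarFn j m t := by
  simp only [haarFn_eq_indicator, Pi.sub_apply, mul_sub, mul_indicator_Ico_one]
  exact (integrable_indicator_Ico_id _ _).sub (integrable_indicator_Ico_id _ _)

lemma haarFn_eq_zero_of_notMem {j m : ℕ} (hm : m < 2 ^ j) {t : ℝ} (ht : t ∉ Set.Ico 0 1) :
    haarFn j m t = 0 := by
  obtain ⟨hab, hmid⟩ := haarFn_breakpoints j m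
  have ha : (0 : ℝ) ≤ m / 2 ^ j := by positivity
  have hc : ((m : ℝ) + 1) / 2 ^ j ≤ 1 := by
    rw [div_le_one (by positivity)]; exact_mod_cast hm
  rw [haarFn]
  split_ifs with h1 h2
  · exact absurd ⟨ha.trans h1.1, by linarith [h1.2]⟩ ht
  · exact absurd ⟨by linarith [h2.1], by linarith [h2.2]⟩ ht
  · rfl

lemma intervalIntegral_mul_haarFn {j m : ℕ} (hm : m < 2 ^ j) (f : ℝ → ℝ) :
    ∫ t in (0 : ℝ)..1, f t * haarFn j m t = ∫ t, f t * haarFn j m t := by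
  rw [intervalIntegral.integral_of_le zero_le_one, integral_Ioc_eq_integral_Ioo,
    ← integral_Ico_eq_integral_Ioo, setIntegral_eq_integral_of_forall_compl_eq_zero
      fun t ht => by rw [haarFn_eq_zero_of_notMem hm ht, mul_zero]]

lemma haarCoeff_eq {x : ℕ → ℝ} (hx : ∀ n, 0 ≤ x n) (N : ℕ) {j m : ℕ} (hm : m < 2 ^ j) :
    haarCoeff x N j m
      = 1 / 2 ^ (2 * j + 2) - (∑ n ∈ range N, tent (2 ^ j * x n - m)) / 2 ^ j / N := by
  have hind : ∀ n t, Set.indicator (Set.Ico (0 : ℝ) t) (fun _ => (1 : ℝ)) (x n)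
      = (Set.Ioi (x n)).indicator 1 t := fun n t => by
    simp [Set.indicator_apply, hx n]
  have hint : ∀ n, Integrable fun t => (Set.Ioi (x n)).indicator 1 t * haarFn j m t := fun n => by
    refine ((integrable_haarFn j m).indicator (measurableSet_Ioi (a := x n))).congr
      (ae_of_all _ fun t => ?_)
    simp [Set.indicator_apply]
  rw [haarCoeff, intervalIntegral_mul_haarFn hm]
  simp only [disc, hind, sub_mul, div_mul_eq_mul_div, sum_mul]
  rw [integral_sub ((integrable_finsetSum _ fun n _ => hint n).div_const _)
      (integrable_mul_haarFn j m), integral_div, integral_finsetSum _ fun n _ => hint n]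
  simp only [integral_indicator_Ioi_mul_haarFn, integral_mul_haarFn, sum_neg_distrib, ← sum_div]
  ring

lemma tent_two_pow_mul_one_sub_radInv {j m r : ℕ} (hr : r < 2 ^ j)
    (hrm : bitRev j r + m + 1 = 2 ^ j) (n : ℕ) :
    tent (2 ^ j * (1 - radInv n) - m) = if n % 2 ^ j = r then tent (radInv (n / 2 ^ j)) else 0 := by
  have hs : n % 2 ^ j < 2 ^ j := Nat.mod_lt _ (by positivity)
  have harg : 2 ^ j * (1 - radInv n) - m
      = 1 - (((bitRev j (n % 2 ^ j) : ℤ) - bitRev j r : ℤ) + radInv (n / 2 ^ j)) := by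
    have : ((bitRev j r : ℕ) : ℝ) + m + 1 = 2 ^ j := by exact_mod_cast hrm
    rw [radInv_eq_radInv_mod_add_radInv_div j n, radInv_eq_bitRev_div hs]
    push_cast
    field_simp
    linarith
  rw [harg, tent_one_sub, tent_int_add (radInv_nonneg _) (radInv_lt_one _).le]
  simp only [sub_eq_zero, Nat.cast_inj, (bitRev_injOn j).eq_iff hs hr]

lemma abs_one_div_two_pow_sub_le {j : ℕ} {N K S : ℝ} (hN : 0 < N)
    (hK : |N - 2 ^ j * K| ≤ 2 ^ j) (hS : |S - K / 4| ≤ 1 / 4) :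
    |1 / 2 ^ (2 * j + 2) - S / 2 ^ j / N| ≤ 1 / 2 ^ j / N := by
  have hd : (0 : ℝ) < 2 ^ j := by positivity
  have hnum : |N - 4 * 2 ^ j * S| ≤ 4 * 2 ^ j := by
    rw [abs_le] at *
    constructor <;> nlinarith
  have heq : 1 / 2 ^ (2 * j + 2) - S / 2 ^ j / N
      = (N - 4 * 2 ^ j * S) / (4 * (2 ^ j) ^ 2 * N) := by
    field_simp
    ring
  have hden : 0 < 4 * (2 ^ j : ℝ) ^ 2 * N := mul_pos (by positivity) hN
  rw [heq, abs_div, abs_of_pos hden, div_le_iff₀ hden]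
  calc |N - 4 * 2 ^ j * S| ≤ 4 * 2 ^ j := hnum
    _ = 1 / 2 ^ j / N * (4 * (2 ^ j) ^ 2 * N) := by field_simp

theorem haarCoeff_reflected_vdc_general (N j m : ℕ) (hm : m < 2^j) :
    (j < Nat.clog 2 N →
      |haarCoeff (fun n => 1 - radInv n) N j m| ≤ (1/2^j) / N) ∧
    (Nat.clog 2 N ≤ j →
      |haarCoeff (fun n => 1 - radInv n) N j m| = 1/2^(2*j+2)) := by
  obtain ⟨r, hr, hrm⟩ := exists_bitRev_eq (j := j) (q := 2 ^ j - 1 - m) (by omega)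
  have hμ : haarCoeff (fun n => 1 - radInv n) N j m = 1 / 2 ^ (2 * j + 2)
      - (∑ n ∈ (range N).filter (· % 2 ^ j = r), tent (radInv (n / 2 ^ j))) / 2 ^ j / N := by
    rw [haarCoeff_eq (fun n => sub_nonneg.2 (radInv_lt_one n).le) N hm, sum_filter]
    simp only [tent_two_pow_mul_one_sub_radInv hr (by omega : bitRev j r + m + 1 = 2 ^ j)]
  refine ⟨fun hj => ?_, fun hj => ?_⟩
  · have hN : 2 ^ j < N := (Nat.lt_clog_iff_pow_lt one_lt_two).1 hj
    have hK := lt_add_sub_one_sub_div_iff hr N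
    rw [hμ, sum_filter_mod_eq_sum_range hr hK fun k => tent (radInv k)]
    exact abs_one_div_two_pow_sub_le (by exact_mod_cast (Nat.two_pow_pos j).trans hN)
      (by exact_mod_cast abs_sub_mul_le_of_forall_lt_iff hr hK) (abs_sum_tent_radInv_sub_le _)
  · have hN : N ≤ 2 ^ j := (Nat.clog_le_iff_le_pow one_lt_two).1 hj
    have hsum : ∑ n ∈ (range N).filter (· % 2 ^ j = r), tent (radInv (n / 2 ^ j)) = 0 :=
      sum_eq_zero fun n hn => by
        rw [Nat.div_eq_of_lt ((mem_range.1 (mem_filter.1 hn).1).trans_le hN), radInv_zero,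
          tent_eq_zero (Or.inl le_rfl)]
    rw [hμ, hsum, zero_div, zero_div, sub_zero, abs_of_pos (by positivity)]

theorem haarCoeff_reflected_vdc (N j m : ℕ) (hN : 0 < N) (hm : m < 2^j) :
    (j < Nat.clog 2 N →
      |haarCoeff (fun n => 1 - radInv n) N j m| ≤ (1/2^j) / N) ∧
    (Nat.clog 2 N ≤ j →
      |haarCoeff (fun n => 1 - radInv n) N j m| = 1/2^(2*j+2)) :=
  haarCoeff_reflected_vdc_general N j m hm
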